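/- Dominating pair of datasets for the Poisson-subsampled Gaussian mechanism under the substitution relation: let σ > 0 and γ ∈ [0,1]. For every pair of finite tuples D, D' of the same length with all entries in [−1,1] that differ in exactly one entry, and every α ≥ 0, H_α(Mγ(D) ‖ Mγ(D')) ≤ H_α((1−γ)·N(0,σ²) + γ·N(1,σ²) ‖ (1−γ)·N(0,σ²) + γ·N(−1,σ²)). Moreover this bound is realized by the datasets D = (0,…,0,1) and D' = (0,…,0,−1). -/

import Mathlib

open MeasureTheory ProbabilityTheory
open scoped ENNReal NNReal

/-- Hockey-stick divergence: `H_α(P ‖ Q) = sup_{E measurable} (P(E) − α·Q(E))`. -/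
noncomputable def hsDiv {X : Type*} [MeasurableSpace X] (α : ℝ) (P Q : Measure X) : ℝ :=
  ⨆ E : {E : Set X // MeasurableSet E}, ((P E).toReal - α * (Q E).toReal)

/-- The Poisson-subsampled Gaussian mechanism:
`Mγ(x) = ∑_{S ⊆ [m]} γ^{|S|} (1−γ)^{m−|S|} · N(∑_{i∈S} x_i, σ²)`. -/
noncomputable def poissonGauss (σ γ : ℝ) {m : ℕ} (x : Fin m → ℝ) : Measure ℝ :=
  ∑ S : Finset (Fin m),
    ENNReal.ofReal (γ ^ S.card * (1 - γ) ^ (m - S.card)) •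
      gaussianReal (∑ i ∈ S, x i) ⟨σ ^ 2, sq_nonneg σ⟩

/-!
Conditioning on whether the differing entry `i` is sampled writes `Mγ(D)` and `Mγ(D')` as the same
mixture, over the sets `S` of other sampled entries, of the pairs `(1-γ) N(t) + γ N(t + D i)` and
`(1-γ) N(t) + γ N(t + D' i)` with `t = ∑_{j ∈ S} D j`. Joint convexity and translation invariance
of `H_α` reduce the claim to these two-point mixtures with means `a, b ∈ [-1, 1]`.

For `α ≥ 1`, after recentring, `H_α` is `∫ f⁺` with
`f = γ φ₀ - (α-1)(1-γ) φ_{-a} - αγ φ_{b-a}`. Pairing `x` with `-x` and using the convexity of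
`t ↦ t⁺` shows that reflecting both means to the nonpositive side only increases `∫ f⁺`. For
nonpositive means `{f ≥ 0}` is an upper set (monotone likelihood ratio), on which a Gaussian gains
mass as its mean grows, so lowering the means to `-1` and `-2` increases `∫ f⁺` further.
For `α < 1` use `H_α(P ‖ Q) = 1 - α + α H_{1/α}(Q ‖ P)` and the symmetry `x ↦ -x`
of the extremal pair.
-/

section HockeyStick

variable {X Y : Type*} [MeasurableSpace X] [MeasurableSpace Y] {α c : ℝ} {P Q : Measure X}

lemma hsDiv_le (h : ∀ E, MeasurableSet E → (P E).toReal - α * (Q E).toReal ≤ c) :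
    hsDiv α P Q ≤ c :=
  have : Nonempty {E : Set X // MeasurableSet E} := ⟨⟨∅, .empty⟩⟩
  ciSup_le fun E => h E.1 E.2

lemma le_hsDiv_of_forall_le (hc : ∀ E, MeasurableSet E → (P E).toReal - α * (Q E).toReal ≤ c)
    {E : Set X} (hE : MeasurableSet E) : (P E).toReal - α * (Q E).toReal ≤ hsDiv α P Q :=
  le_ciSup (f := fun E : {E : Set X // MeasurableSet E} => (P E).toReal - α * (Q E).toReal)
    ⟨c, by rintro _ ⟨E, rfl⟩; exact hc E.1 E.2⟩ ⟨E, hE⟩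

lemma le_hsDiv (hα : 0 ≤ α) [IsFiniteMeasure P] {E : Set X} (hE : MeasurableSet E) :
    (P E).toReal - α * (Q E).toReal ≤ hsDiv α P Q :=
  le_hsDiv_of_forall_le (c := (P Set.univ).toReal) (fun E _ => by
    have := ENNReal.toReal_mono (measure_ne_top P _) (measure_mono (Set.subset_univ E))
    nlinarith [ENNReal.toReal_nonneg (a := Q E)]) hE

lemma hsDiv_zero [IsProbabilityMeasure P] : hsDiv 0 P Q = 1 := by
  refine le_antisymm (hsDiv_le fun E _ => ?_) ?_
  · simpa using ENNReal.toReal_mono ENNReal.one_ne_top prob_le_one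
  · simpa using le_hsDiv le_rfl (Q := Q) (P := P) .univ

lemma hsDiv_map_le (hα : 0 ≤ α) [IsFiniteMeasure P] {f : X → Y} (hf : Measurable f) :
    hsDiv α (P.map f) (Q.map f) ≤ hsDiv α P Q :=
  hsDiv_le fun E hE => by
    rw [Measure.map_apply hf hE, Measure.map_apply hf hE]
    exact le_hsDiv hα (hf hE)

lemma hsDiv_map_measurableEquiv (hα : 0 ≤ α) [IsFiniteMeasure P] (e : X ≃ᵐ Y) :
    hsDiv α (P.map e) (Q.map e) = hsDiv α P Q := by
  refine le_antisymm (hsDiv_map_le hα e.measurable) ?_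
  conv_lhs => rw [← e.map_symm_map (μ := P), ← e.map_symm_map (μ := Q)]
  exact hsDiv_map_le hα e.symm.measurable

lemma toReal_sum_ofReal_smul_apply {ι : Type*} {s : Finset ι} {w : ι → ℝ}
    (hw : ∀ k ∈ s, 0 ≤ w k) (P : ι → Measure X) [∀ k, IsFiniteMeasure (P k)] (E : Set X) :
    ((∑ k ∈ s, ENNReal.ofReal (w k) • P k) E).toReal = ∑ k ∈ s, w k * (P k E).toReal := by
  simp only [Measure.coe_finsetSum, Finset.sum_apply, Measure.smul_apply, smul_eq_mul]
  rw [ENNReal.toReal_sum fun k _ => ENNReal.mul_ne_top ENNReal.ofReal_ne_top (measure_ne_top _ _)]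
  refine Finset.sum_congr rfl fun k hk => ?_
  rw [ENNReal.toReal_mul, ENNReal.toReal_ofReal (hw k hk)]

/-- Joint convexity of the hockey-stick divergence. -/
lemma hsDiv_sum_smul_le {ι : Type*} {s : Finset ι} {w : ι → ℝ} (hw : ∀ k ∈ s, 0 ≤ w k)
    (hα : 0 ≤ α) (P Q : ι → Measure X) [∀ k, IsFiniteMeasure (P k)]
    [∀ k, IsFiniteMeasure (Q k)] :
    hsDiv α (∑ k ∈ s, ENNReal.ofReal (w k) • P k) (∑ k ∈ s, ENNReal.ofReal (w k) • Q k)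
      ≤ ∑ k ∈ s, w k * hsDiv α (P k) (Q k) :=
  hsDiv_le fun E hE => by
    rw [toReal_sum_ofReal_smul_apply hw, toReal_sum_ofReal_smul_apply hw, Finset.mul_sum,
      ← Finset.sum_sub_distrib]
    refine Finset.sum_le_sum fun k hk => ?_
    rw [mul_left_comm, ← mul_sub]
    exact mul_le_mul_of_nonneg_left (le_hsDiv hα hE) (hw k hk)

lemma hsDiv_le_one_sub_add_mul_hsDiv_inv (hα : 0 < α) [IsProbabilityMeasure P]
    [IsProbabilityMeasure Q] : hsDiv α P Q ≤ 1 - α + α * hsDiv α⁻¹ Q P :=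
  hsDiv_le fun E hE => by
    have compl : (P E).toReal - α * (Q E).toReal
        = 1 - α + α * ((Q Eᶜ).toReal - α⁻¹ * (P Eᶜ).toReal) := by
      simp only [← measureReal_def, probReal_compl_eq_one_sub hE]
      field_simp
      ring
    rw [compl]
    exact add_le_add_right
      (mul_le_mul_of_nonneg_left (le_hsDiv (inv_nonneg.2 hα.le) hE.compl) hα.le) _

lemma hsDiv_eq_one_sub_add_mul_hsDiv_inv (hα : 0 < α) [IsProbabilityMeasure P]
    [IsProbabilityMeasure Q] : hsDiv α P Q = 1 - α + α * hsDiv α⁻¹ Q P := by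
  refine le_antisymm (hsDiv_le_one_sub_add_mul_hsDiv_inv hα) ?_
  have := mul_le_mul_of_nonneg_left
    (hsDiv_le_one_sub_add_mul_hsDiv_inv (P := Q) (Q := P) (inv_pos.2 hα)) hα.le
  rw [inv_inv, mul_add, mul_sub, mul_inv_cancel₀ hα.ne', ← mul_assoc, mul_inv_cancel₀ hα.ne',
    one_mul] at this
  linarith

lemma setIntegral_le_integral_max_zero {μ : Measure X} {f : X → ℝ} (hf : Integrable f μ)
    (E : Set X) :
    ∫ x in E, f x ∂μ ≤ ∫ x, max (f x) 0 ∂μ :=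
  calc ∫ x in E, f x ∂μ ≤ ∫ x in E, max (f x) 0 ∂μ :=
        setIntegral_mono hf.integrableOn hf.pos_part.integrableOn fun _ => le_max_left _ _
    _ ≤ ∫ x, max (f x) 0 ∂μ :=
        setIntegral_le_integral hf.pos_part (ae_of_all _ fun _ => le_max_right _ _)

lemma integral_max_zero_eq_setIntegral {μ : Measure X} {f : X → ℝ} (hf : Measurable f) :
    ∫ x, max (f x) 0 ∂μ = ∫ x in {x | 0 ≤ f x}, f x ∂μ := by
  rw [← integral_indicator (measurableSet_le measurable_const hf)]
  congr 1 with x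
  by_cases hx : 0 ≤ f x
  · simp [hx]
  · simp [hx, (not_le.1 hx).le]

lemma hsDiv_eq_integral_max_zero {μ : Measure X} {f : X → ℝ} (hfm : Measurable f)
    (hf : Integrable f μ)
    (h : ∀ E, MeasurableSet E → (P E).toReal - α * (Q E).toReal = ∫ x in E, f x ∂μ) :
    hsDiv α P Q = ∫ x, max (f x) 0 ∂μ := by
  have bound : ∀ E, MeasurableSet E → (P E).toReal - α * (Q E).toReal ≤ ∫ x, max (f x) 0 ∂μ :=
    fun E hE => h E hE ▸ setIntegral_le_integral_max_zero hf E
  have hS : MeasurableSet {x | 0 ≤ f x} := measurableSet_le measurable_const hfm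
  refine le_antisymm (hsDiv_le bound) ?_
  calc ∫ x, max (f x) 0 ∂μ = ∫ x in {x | 0 ≤ f x}, f x ∂μ := integral_max_zero_eq_setIntegral hfm
    _ = (P {x | 0 ≤ f x}).toReal - α * (Q {x | 0 ≤ f x}).toReal := (h _ hS).symm
    _ ≤ hsDiv α P Q := le_hsDiv_of_forall_le bound hS

end HockeyStick

section GaussianDensity

open Real

variable {v : ℝ≥0}

lemma gaussianPDFReal_le_of_sq_le {μ ν x y : ℝ} (h : (x - μ) ^ 2 ≤ (y - ν) ^ 2) :
    gaussianPDFReal ν v y ≤ gaussianPDFReal μ v x := by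
  simp only [gaussianPDFReal]
  gcongr

lemma gaussianPDFReal_mul_le_mul_of_nonpos {m x y : ℝ} (hm : m ≤ 0) (hxy : x ≤ y) :
    gaussianPDFReal m v y * gaussianPDFReal 0 v x
      ≤ gaussianPDFReal m v x * gaussianPDFReal 0 v y := by
  simp only [gaussianPDFReal]
  rw [mul_mul_mul_comm, mul_mul_mul_comm _ (rexp _), ← Real.exp_add, ← Real.exp_add, ← add_div,
    ← add_div]
  gcongr ?_ * rexp (?_ / _)
  nlinarith

lemma gaussianPDFReal_neg_neg (μ x : ℝ) : gaussianPDFReal (-μ) v (-x) = gaussianPDFReal μ v x := by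
  simp only [gaussianPDFReal]
  ring_nf

lemma gaussianPDFReal_neg_abs {m x : ℝ} (hx : 0 ≤ x) :
    gaussianPDFReal (-|m|) v x = min (gaussianPDFReal m v x) (gaussianPDFReal m v (-x)) ∧
      gaussianPDFReal (-|m|) v (-x) = max (gaussianPDFReal m v x) (gaussianPDFReal m v (-x)) := by
  rcases le_total 0 m with hm | hm
  · have hle : gaussianPDFReal m v (-x) ≤ gaussianPDFReal m v x :=
      gaussianPDFReal_le_of_sq_le (by nlinarith)
    rw [abs_of_nonneg hm, min_eq_right hle, max_eq_left hle]
    exact ⟨by simpa using gaussianPDFReal_neg_neg (v := v) m (-x), gaussianPDFReal_neg_neg m x⟩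
  · have hle : gaussianPDFReal m v x ≤ gaussianPDFReal m v (-x) :=
      gaussianPDFReal_le_of_sq_le (by nlinarith)
    rw [abs_of_nonpos hm, neg_neg, min_eq_left hle, max_eq_right hle]
    exact ⟨rfl, rfl⟩

lemma gaussianReal_apply_le_of_isUpperSet {μ₁ μ₂ : ℝ} (h : μ₁ ≤ μ₂) {S : Set ℝ}
    (hS : IsUpperSet S) : gaussianReal μ₁ v S ≤ gaussianReal μ₂ v S := by
  rw [show μ₂ = μ₁ + (μ₂ - μ₁) by ring, ← gaussianReal_map_add_const,
    Measure.map_apply (measurable_add_const _) hS.ordConnected.measurableSet]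
  exact measure_mono fun x hx => hS (by linarith) hx

end GaussianDensity

section DifferenceDensity

variable {v : ℝ≥0} {c₀ c₁ c₂ m₁ m₂ : ℝ}

noncomputable def gaussianDiffPDF (v : ℝ≥0) (c₀ c₁ c₂ m₁ m₂ x : ℝ) : ℝ :=
  c₀ * gaussianPDFReal 0 v x - c₁ * gaussianPDFReal m₁ v x - c₂ * gaussianPDFReal m₂ v x

lemma measurable_gaussianDiffPDF : Measurable (gaussianDiffPDF v c₀ c₁ c₂ m₁ m₂) := by
  unfold gaussianDiffPDF
  fun_prop

lemma integrable_gaussianDiffPDF : Integrable (gaussianDiffPDF v c₀ c₁ c₂ m₁ m₂) :=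
  (((integrable_gaussianPDFReal 0 v).const_mul c₀).sub
    ((integrable_gaussianPDFReal m₁ v).const_mul c₁)).sub
    ((integrable_gaussianPDFReal m₂ v).const_mul c₂)

lemma setIntegral_gaussianDiffPDF (hv : v ≠ 0) (E : Set ℝ) :
    ∫ x in E, gaussianDiffPDF v c₀ c₁ c₂ m₁ m₂ x
      = c₀ * (gaussianReal 0 v E).toReal - c₁ * (gaussianReal m₁ v E).toReal
        - c₂ * (gaussianReal m₂ v E).toReal := by
  have hpdf : ∀ μ, IntegrableOn (gaussianPDFReal μ v) E := fun μ =>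
    (integrable_gaussianPDFReal μ v).integrableOn
  simp only [gaussianReal_apply_eq_integral _ hv, ENNReal.toReal_ofReal
    (setIntegral_nonneg_of_ae (ae_of_all _ (gaussianPDFReal_nonneg _ v))), gaussianDiffPDF]
  rw [integral_sub, integral_sub, integral_const_mul, integral_const_mul, integral_const_mul]
  all_goals first
    | exact (hpdf _).const_mul _
    | exact ((hpdf _).const_mul _).sub ((hpdf _).const_mul _)

lemma isUpperSet_setOf_nonneg_gaussianDiffPDF (hv : v ≠ 0) (hc₁ : 0 ≤ c₁) (hc₂ : 0 ≤ c₂)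
    (hm₁ : m₁ ≤ 0) (hm₂ : m₂ ≤ 0) :
    IsUpperSet {x | 0 ≤ gaussianDiffPDF v c₀ c₁ c₂ m₁ m₂ x} := by
  intro x y hxy hx
  simp only [Set.mem_ofPred_eq, gaussianDiffPDF] at hx ⊢
  have hx0 := gaussianPDFReal_pos 0 v x hv
  have hy0 := gaussianPDFReal_pos 0 v y hv
  have r₁ := mul_le_mul_of_nonneg_left (gaussianPDFReal_mul_le_mul_of_nonpos (v := v) hm₁ hxy) hc₁
  have r₂ := mul_le_mul_of_nonneg_left (gaussianPDFReal_mul_le_mul_of_nonpos (v := v) hm₂ hxy) hc₂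
  nlinarith

lemma integral_max_zero_gaussianDiffPDF_le_of_nonpos (hv : v ≠ 0) (hc₁ : 0 ≤ c₁) (hc₂ : 0 ≤ c₂)
    {m₁' m₂' : ℝ} (h₁ : m₁' ≤ m₁) (h₂ : m₂' ≤ m₂) (hm₁ : m₁ ≤ 0) (hm₂ : m₂ ≤ 0) :
    ∫ x, max (gaussianDiffPDF v c₀ c₁ c₂ m₁ m₂ x) 0
      ≤ ∫ x, max (gaussianDiffPDF v c₀ c₁ c₂ m₁' m₂' x) 0 := by
  set S := {x | 0 ≤ gaussianDiffPDF v c₀ c₁ c₂ m₁ m₂ x}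
  have hS : IsUpperSet S := isUpperSet_setOf_nonneg_gaussianDiffPDF hv hc₁ hc₂ hm₁ hm₂
  have mono : ∀ {μ μ' : ℝ}, μ' ≤ μ → (gaussianReal μ' v S).toReal ≤ (gaussianReal μ v S).toReal :=
    fun h => ENNReal.toReal_mono (measure_ne_top _ _) (gaussianReal_apply_le_of_isUpperSet h hS)
  calc ∫ x, max (gaussianDiffPDF v c₀ c₁ c₂ m₁ m₂ x) 0
        = ∫ x in S, gaussianDiffPDF v c₀ c₁ c₂ m₁ m₂ x :=
        integral_max_zero_eq_setIntegral measurable_gaussianDiffPDF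
    _ ≤ ∫ x in S, gaussianDiffPDF v c₀ c₁ c₂ m₁' m₂' x := by
        rw [setIntegral_gaussianDiffPDF hv, setIntegral_gaussianDiffPDF hv]
        have := mul_le_mul_of_nonneg_left (mono h₁) hc₁
        have := mul_le_mul_of_nonneg_left (mono h₂) hc₂
        linarith
    _ ≤ ∫ x, max (gaussianDiffPDF v c₀ c₁ c₂ m₁' m₂' x) 0 :=
        setIntegral_le_integral_max_zero integrable_gaussianDiffPDF S

/-- Rearrangement inequality for the convex function `t ↦ max t 0`. -/
lemma max_zero_add_max_zero_le_min_max (p a₁ a₂ b₁ b₂ : ℝ) :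
    max (p - a₁ - a₂) 0 + max (p - b₁ - b₂) 0
      ≤ max (p - min a₁ b₁ - min a₂ b₂) 0 + max (p - max a₁ b₁ - max a₂ b₂) 0 := by
  simp only [min_def, max_def]
  split_ifs <;> linarith

lemma max_zero_gaussianDiffPDF_add_neg_le (hc₁ : 0 ≤ c₁) (hc₂ : 0 ≤ c₂) (x : ℝ) :
    max (gaussianDiffPDF v c₀ c₁ c₂ m₁ m₂ x) 0 + max (gaussianDiffPDF v c₀ c₁ c₂ m₁ m₂ (-x)) 0
      ≤ max (gaussianDiffPDF v c₀ c₁ c₂ (-|m₁|) (-|m₂|) x) 0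
        + max (gaussianDiffPDF v c₀ c₁ c₂ (-|m₁|) (-|m₂|) (-x)) 0 := by
  wlog hx : 0 ≤ x generalizing x
  · have := this (-x) (by linarith)
    rw [neg_neg] at this
    linarith
  obtain ⟨lo₁, hi₁⟩ := gaussianPDFReal_neg_abs (v := v) (m := m₁) hx
  obtain ⟨lo₂, hi₂⟩ := gaussianPDFReal_neg_abs (v := v) (m := m₂) hx
  have h0 : gaussianPDFReal 0 v (-x) = gaussianPDFReal 0 v x := by
    simpa using gaussianPDFReal_neg_neg (v := v) 0 x
  simp only [gaussianDiffPDF, lo₁, hi₁, lo₂, hi₂, h0, mul_min_of_nonneg _ _ hc₁,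
    mul_max_of_nonneg _ _ hc₁, mul_min_of_nonneg _ _ hc₂, mul_max_of_nonneg _ _ hc₂]
  exact max_zero_add_max_zero_le_min_max _ _ _ _ _

lemma integral_max_zero_gaussianDiffPDF_le_neg_abs (hc₁ : 0 ≤ c₁) (hc₂ : 0 ≤ c₂) :
    ∫ x, max (gaussianDiffPDF v c₀ c₁ c₂ m₁ m₂ x) 0
      ≤ ∫ x, max (gaussianDiffPDF v c₀ c₁ c₂ (-|m₁|) (-|m₂|) x) 0 := by
  have symm : ∀ f : ℝ → ℝ, Integrable f → ∫ x, (f x + f (-x)) = 2 * ∫ x, f x := fun f hf => by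
    rw [integral_add hf hf.comp_neg, integral_neg_eq_self]
    ring
  set f := fun x => max (gaussianDiffPDF v c₀ c₁ c₂ m₁ m₂ x) 0
  set g := fun x => max (gaussianDiffPDF v c₀ c₁ c₂ (-|m₁|) (-|m₂|) x) 0
  have hf : Integrable f := integrable_gaussianDiffPDF.pos_part
  have hg : Integrable g := integrable_gaussianDiffPDF.pos_part
  have h : ∫ x, (f x + f (-x)) ≤ ∫ x, (g x + g (-x)) := integral_mono
    (hf.add hf.comp_neg) (hg.add hg.comp_neg) (max_zero_gaussianDiffPDF_add_neg_le hc₁ hc₂)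
  rw [symm f hf, symm g hg] at h
  linarith

end DifferenceDensity

section GaussianMixture

variable {v : ℝ≥0} {γ α : ℝ}

noncomputable def gaussMix (v : ℝ≥0) (γ μ₀ μ₁ : ℝ) : Measure ℝ :=
  ENNReal.ofReal (1 - γ) • gaussianReal μ₀ v + ENNReal.ofReal γ • gaussianReal μ₁ v

instance (v : ℝ≥0) (γ μ₀ μ₁ : ℝ) : IsFiniteMeasure (gaussMix v γ μ₀ μ₁) :=
  ⟨by simp [gaussMix]⟩

lemma isProbabilityMeasure_gaussMix (hγ0 : 0 ≤ γ) (hγ1 : γ ≤ 1) (μ₀ μ₁ : ℝ) :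
    IsProbabilityMeasure (gaussMix v γ μ₀ μ₁) :=
  ⟨by simp [gaussMix, ← ENNReal.ofReal_add (sub_nonneg.2 hγ1) hγ0]⟩

lemma toReal_gaussMix_apply (hγ0 : 0 ≤ γ) (hγ1 : γ ≤ 1) (μ₀ μ₁ : ℝ) (E : Set ℝ) :
    (gaussMix v γ μ₀ μ₁ E).toReal
      = (1 - γ) * (gaussianReal μ₀ v E).toReal + γ * (gaussianReal μ₁ v E).toReal := by
  simp only [gaussMix, Measure.add_apply, Measure.smul_apply, smul_eq_mul]
  rw [ENNReal.toReal_add (by finiteness) (by finiteness), ENNReal.toReal_mul, ENNReal.toReal_mul,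
    ENNReal.toReal_ofReal (sub_nonneg.2 hγ1), ENNReal.toReal_ofReal hγ0]

lemma hsDiv_gaussMix_add_const (hα : 0 ≤ α) (μ₀ μ₁ μ₂ t : ℝ) :
    hsDiv α (gaussMix v γ (μ₀ + t) (μ₁ + t)) (gaussMix v γ (μ₀ + t) (μ₂ + t))
      = hsDiv α (gaussMix v γ μ₀ μ₁) (gaussMix v γ μ₀ μ₂) := by
  have hmap : ∀ μ μ', (gaussMix v γ μ μ').map (MeasurableEquiv.addRight t)
      = gaussMix v γ (μ + t) (μ' + t) := fun μ μ' => by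
    simp only [gaussMix, MeasurableEquiv.coe_addRight, Measure.map_add _ _ (measurable_add_const t),
      Measure.map_smul, gaussianReal_map_add_const]
  rw [← hmap, ← hmap, hsDiv_map_measurableEquiv hα]

lemma hsDiv_gaussMix_neg (hα : 0 ≤ α) (μ₀ μ₁ μ₂ : ℝ) :
    hsDiv α (gaussMix v γ (-μ₀) (-μ₁)) (gaussMix v γ (-μ₀) (-μ₂))
      = hsDiv α (gaussMix v γ μ₀ μ₁) (gaussMix v γ μ₀ μ₂) := by
  have hmap : ∀ μ μ', (gaussMix v γ μ μ').map (MeasurableEquiv.neg ℝ)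
      = gaussMix v γ (-μ) (-μ') := fun μ μ' => by
    change Measure.map (fun x => -x) _ = _
    simp only [gaussMix, Measure.map_add _ _ measurable_neg, Measure.map_smul,
      gaussianReal_map_neg]
  rw [← hmap, ← hmap, hsDiv_map_measurableEquiv hα]

lemma hsDiv_gaussMix_eq_integral (hv : v ≠ 0) (hγ0 : 0 ≤ γ) (hγ1 : γ ≤ 1) (m₁ m₂ : ℝ) :
    hsDiv α (gaussMix v γ m₁ 0) (gaussMix v γ m₁ m₂)
      = ∫ x, max (gaussianDiffPDF v γ ((α - 1) * (1 - γ)) (α * γ) m₁ m₂ x) 0 :=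
  hsDiv_eq_integral_max_zero measurable_gaussianDiffPDF integrable_gaussianDiffPDF fun E _ => by
    rw [setIntegral_gaussianDiffPDF hv, toReal_gaussMix_apply hγ0 hγ1,
      toReal_gaussMix_apply hγ0 hγ1]
    ring

lemma hsDiv_gaussMix_le_of_one_le (hv : v ≠ 0) (hγ0 : 0 ≤ γ) (hγ1 : γ ≤ 1) (hα : 1 ≤ α)
    {a b : ℝ} (ha : |a| ≤ 1) (hb : |b| ≤ 1) :
    hsDiv α (gaussMix v γ 0 a) (gaussMix v γ 0 b)
      ≤ hsDiv α (gaussMix v γ 0 1) (gaussMix v γ 0 (-1)) := by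
  have recenter : ∀ a b : ℝ, hsDiv α (gaussMix v γ 0 a) (gaussMix v γ 0 b)
      = hsDiv α (gaussMix v γ (-a) 0) (gaussMix v γ (-a) (b - a)) := fun a b => by
    simpa using hsDiv_gaussMix_add_const (v := v) (γ := γ) (by linarith) (-a) 0 (b - a) a
  have hc₁ : 0 ≤ (α - 1) * (1 - γ) := mul_nonneg (by linarith) (by linarith)
  have hc₂ : 0 ≤ α * γ := mul_nonneg (by linarith) hγ0
  have hba : |b - a| ≤ 2 := (abs_sub b a).trans (by linarith)
  rw [recenter, recenter, hsDiv_gaussMix_eq_integral hv hγ0 hγ1,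
    hsDiv_gaussMix_eq_integral hv hγ0 hγ1]
  refine (integral_max_zero_gaussianDiffPDF_le_neg_abs hc₁ hc₂).trans ?_
  rw [abs_neg, show (-1 : ℝ) - 1 = -2 by norm_num]
  exact integral_max_zero_gaussianDiffPDF_le_of_nonpos hv hc₁ hc₂ (by linarith) (by linarith)
    (neg_nonpos.2 (abs_nonneg a)) (neg_nonpos.2 (abs_nonneg _))

lemma hsDiv_gaussMix_le (hv : v ≠ 0) (hγ0 : 0 ≤ γ) (hγ1 : γ ≤ 1) (hα : 0 ≤ α)
    {a b : ℝ} (ha : |a| ≤ 1) (hb : |b| ≤ 1) :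
    hsDiv α (gaussMix v γ 0 a) (gaussMix v γ 0 b)
      ≤ hsDiv α (gaussMix v γ 0 1) (gaussMix v γ 0 (-1)) := by
  have := isProbabilityMeasure_gaussMix (v := v) hγ0 hγ1
  rcases le_or_gt 1 α with h1 | h1
  · exact hsDiv_gaussMix_le_of_one_le hv hγ0 hγ1 h1 ha hb
  rcases hα.eq_or_lt with rfl | hpos
  · rw [hsDiv_zero, hsDiv_zero]
  rw [hsDiv_eq_one_sub_add_mul_hsDiv_inv hpos, hsDiv_eq_one_sub_add_mul_hsDiv_inv hpos]
  refine add_le_add_right (mul_le_mul_of_nonneg_left ?_ hpos.le) _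
  calc hsDiv α⁻¹ (gaussMix v γ 0 b) (gaussMix v γ 0 a)
      ≤ hsDiv α⁻¹ (gaussMix v γ 0 1) (gaussMix v γ 0 (-1)) :=
        hsDiv_gaussMix_le_of_one_le hv hγ0 hγ1 ((one_le_inv₀ hpos).2 h1.le) hb ha
    _ = hsDiv α⁻¹ (gaussMix v γ 0 (-1)) (gaussMix v γ 0 1) := by
        simpa using (hsDiv_gaussMix_neg (v := v) (γ := γ) (inv_nonneg.2 hpos.le) 0 1 (-1)).symm

end GaussianMixture

section Mechanism

open Finset

variable {σ γ : ℝ} {m : ℕ}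

/-- Conditioning on whether the entry `i` is sampled. -/
lemma poissonGauss_eq_sum_gaussMix (hγ0 : 0 ≤ γ) (hγ1 : γ ≤ 1) (x : Fin m → ℝ) (i : Fin m) :
    poissonGauss σ γ x = ∑ S ∈ (univ.erase i).powerset,
      ENNReal.ofReal (γ ^ #S * (1 - γ) ^ (#(univ.erase i) - #S)) •
        gaussMix ⟨σ ^ 2, sq_nonneg σ⟩ γ (∑ j ∈ S, x j) (x i + ∑ j ∈ S, x j) := by
  rw [poissonGauss, ← powerset_univ, ← insert_erase (mem_univ i),
    sum_powerset_insert (notMem_erase i univ), ← sum_add_distrib, insert_erase (mem_univ i)]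
  refine sum_congr rfl fun S hS => ?_
  have hiS : i ∉ S := fun h => notMem_erase i univ (mem_powerset.1 hS h)
  have hS_card : #S ≤ #(univ.erase i) := card_le_card (mem_powerset.1 hS)
  have hm : #(univ.erase i) = m - 1 := by
    rw [card_erase_of_mem (mem_univ i), card_univ, Fintype.card_fin]
  have hcoef : 0 ≤ γ ^ #S * (1 - γ) ^ (#(univ.erase i) - #S) :=
    mul_nonneg (pow_nonneg hγ0 _) (pow_nonneg (sub_nonneg.2 hγ1) _)
  have h₁ : m - #S = #(univ.erase i) - #S + 1 := by have := i.pos; omega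
  have h₂ : m - (#S + 1) = #(univ.erase i) - #S := by omega
  unfold gaussMix
  rw [smul_add, smul_smul, smul_smul, ← ENNReal.ofReal_mul hcoef, ← ENNReal.ofReal_mul hcoef,
    sum_insert hiS, card_insert_of_notMem hiS, h₁, h₂]
  congr 3 <;> ring

lemma poissonGauss_snoc_zero (hγ0 : 0 ≤ γ) (hγ1 : γ ≤ 1) (s : ℝ) :
    poissonGauss σ γ (Fin.snoc (fun _ : Fin m => (0 : ℝ)) s)
      = gaussMix ⟨σ ^ 2, sq_nonneg σ⟩ γ 0 s := by
  rw [poissonGauss_eq_sum_gaussMix hγ0 hγ1 _ (Fin.last m)]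
  have hzero : ∀ S ∈ (univ.erase (Fin.last m)).powerset,
      ∑ j ∈ S, (Fin.snoc (fun _ : Fin m => (0 : ℝ)) s : Fin (m + 1) → ℝ) j = 0 :=
    fun S hS => sum_eq_zero fun j hj => by
      obtain ⟨k, rfl⟩ := Fin.exists_castSucc_eq.2 (ne_of_mem_erase (mem_powerset.1 hS hj))
      simp
  rw [sum_congr rfl fun S hS => by rw [hzero S hS], ← sum_smul,
    ← ENNReal.ofReal_sum_of_nonneg fun S _ =>
      mul_nonneg (pow_nonneg hγ0 _) (pow_nonneg (sub_nonneg.2 hγ1) _),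
    sum_pow_mul_eq_add_pow]
  simp

lemma hsDiv_poissonGauss_le (hσ : σ ≠ 0) (hγ0 : 0 ≤ γ) (hγ1 : γ ≤ 1) {D D' : Fin m → ℝ}
    (hD : ∀ j, D j ∈ Set.Icc (-1 : ℝ) 1) (hD' : ∀ j, D' j ∈ Set.Icc (-1 : ℝ) 1) {i : Fin m}
    (hagree : ∀ j, j ≠ i → D j = D' j) {α : ℝ} (hα : 0 ≤ α) :
    hsDiv α (poissonGauss σ γ D) (poissonGauss σ γ D')
      ≤ hsDiv α (gaussMix ⟨σ ^ 2, sq_nonneg σ⟩ γ 0 1) (gaussMix ⟨σ ^ 2, sq_nonneg σ⟩ γ 0 (-1)) := by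
  set v : ℝ≥0 := ⟨σ ^ 2, sq_nonneg σ⟩
  have hv : v ≠ 0 := fun h => pow_ne_zero 2 hσ (congrArg NNReal.toReal h)
  set w : Finset (Fin m) → ℝ := fun S => γ ^ #S * (1 - γ) ^ (#(univ.erase i) - #S)
  have hw : ∀ S ∈ (univ.erase i).powerset, 0 ≤ w S := fun S _ =>
    mul_nonneg (pow_nonneg hγ0 _) (pow_nonneg (sub_nonneg.2 hγ1) _)
  have hD'_eq : poissonGauss σ γ D' = ∑ S ∈ (univ.erase i).powerset,
      ENNReal.ofReal (w S) • gaussMix v γ (∑ j ∈ S, D j) (D' i + ∑ j ∈ S, D j) := by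
    rw [poissonGauss_eq_sum_gaussMix hγ0 hγ1 D' i]
    refine sum_congr rfl fun S hS => ?_
    rw [sum_congr rfl fun j hj => hagree j (ne_of_mem_erase (mem_powerset.1 hS hj))]
  rw [poissonGauss_eq_sum_gaussMix hγ0 hγ1 D i, hD'_eq]
  calc _ ≤ ∑ S ∈ (univ.erase i).powerset, w S * hsDiv α
          (gaussMix v γ (∑ j ∈ S, D j) (D i + ∑ j ∈ S, D j))
          (gaussMix v γ (∑ j ∈ S, D j) (D' i + ∑ j ∈ S, D j)) :=
        hsDiv_sum_smul_le hw hα _ _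
    _ ≤ ∑ S ∈ (univ.erase i).powerset, w S * hsDiv α (gaussMix v γ 0 1) (gaussMix v γ 0 (-1)) :=
        sum_le_sum fun S hS => mul_le_mul_of_nonneg_left (by
          simpa using (hsDiv_gaussMix_add_const hα 0 (D i) (D' i) (∑ j ∈ S, D j)).trans_le
            (hsDiv_gaussMix_le hv hγ0 hγ1 hα (abs_le.2 (hD i)) (abs_le.2 (hD' i)))) (hw S hS)
    _ = _ := by rw [← sum_mul, sum_pow_mul_eq_add_pow, add_sub_cancel, one_pow, one_mul]

end Mechanism

/-- Dominating pair of datasets for the Poisson-subsampled Gaussian mechanism under the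
substitution relation: for same-length datasets with entries in `[−1,1]` differing in exactly
one entry, `H_α(Mγ(D) ‖ Mγ(D')) ≤ H_α((1−γ)N(0,σ²) + γN(1,σ²) ‖ (1−γ)N(0,σ²) + γN(−1,σ²))`
for all `α ≥ 0`, and the bound is realized by `D = (0,…,0,1)`, `D' = (0,…,0,−1)`. -/
theorem poissonGauss_dominating_pair_substitution (σ γ : ℝ) (hσ : 0 < σ)
    (hγ0 : 0 ≤ γ) (hγ1 : γ ≤ 1) :
    (∀ (m : ℕ) (D D' : Fin m → ℝ),
      (∀ j, D j ∈ Set.Icc (-1 : ℝ) 1) → (∀ j, D' j ∈ Set.Icc (-1 : ℝ) 1) →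
      (∃ i : Fin m, D i ≠ D' i ∧ ∀ j : Fin m, j ≠ i → D j = D' j) →
      ∀ α : ℝ, 0 ≤ α →
        hsDiv α (poissonGauss σ γ D) (poissonGauss σ γ D') ≤
          hsDiv α
            (ENNReal.ofReal (1 - γ) • gaussianReal 0 ⟨σ ^ 2, sq_nonneg σ⟩ +
              ENNReal.ofReal γ • gaussianReal 1 ⟨σ ^ 2, sq_nonneg σ⟩)
            (ENNReal.ofReal (1 - γ) • gaussianReal 0 ⟨σ ^ 2, sq_nonneg σ⟩ +
              ENNReal.ofReal γ • gaussianReal (-1) ⟨σ ^ 2, sq_nonneg σ⟩)) ∧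
    (∀ m : ℕ,
      poissonGauss σ γ (Fin.snoc (fun _ : Fin m => (0 : ℝ)) 1) =
        ENNReal.ofReal (1 - γ) • gaussianReal 0 ⟨σ ^ 2, sq_nonneg σ⟩ +
          ENNReal.ofReal γ • gaussianReal 1 ⟨σ ^ 2, sq_nonneg σ⟩ ∧
      poissonGauss σ γ (Fin.snoc (fun _ : Fin m => (0 : ℝ)) (-1)) =
        ENNReal.ofReal (1 - γ) • gaussianReal 0 ⟨σ ^ 2, sq_nonneg σ⟩ +
          ENNReal.ofReal γ • gaussianReal (-1) ⟨σ ^ 2, sq_nonneg σ⟩) := by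
  exact ⟨fun m D D' hD hD' ⟨i, _, hagree⟩ α hα =>
      hsDiv_poissonGauss_le hσ.ne' hγ0 hγ1 hD hD' hagree hα,
    fun m => ⟨poissonGauss_snoc_zero hγ0 hγ1 1, poissonGauss_snoc_zero hγ0 hγ1 (-1)⟩⟩
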